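/- Soundness of the local-lexing Earley algorithm: for every context-free grammar G, local lexing ℓℓ = (Lex, Sel) and input D ∈ Σ*, every item in the computed item set 𝕴 is p-valid for some path p ∈ 𝕻; that is, 𝕴 ⊆ ⟨𝕻⟩. -/

import Mathlib

namespace LL
section Defs

/-- A context-free grammar `(𝔑, 𝔗, ℜ, 𝔖)`: nonterminals are the type `N`,
terminals the type `T` (automatically disjoint), `rules ⊆ 𝔑 × (𝔑 ∪ 𝔗)*`,
and `start ∈ 𝔑`. -/
structure CFG (N T : Type*) where
  rules : Set (N × List (N ⊕ T))
  start : N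

variable {N T C : Type*}

/-- One derivation step `α ⇒ β`. -/
def CFG.Step (G : CFG N T) (α β : List (N ⊕ T)) : Prop :=
  ∃ a A b γ, α = a ++ Sum.inl A :: b ∧ β = a ++ γ ++ b ∧ (A, γ) ∈ G.rules

/-- `⇒*`, the reflexive transitive closure of `⇒`. -/
def CFG.Derives (G : CFG N T) : List (N ⊕ T) → List (N ⊕ T) → Prop :=
  Relation.ReflTransGen G.Step

/-- `ℒ = { w ∈ 𝔗* | 𝔖 ⇒* w }`. -/
def CFG.lang (G : CFG N T) : Set (List T) :=
  {w | G.Derives [Sum.inl G.start] (w.map Sum.inr)}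

/-- `ℒ_prefix = { w ∈ 𝔗* | ∃ α. 𝔖 ⇒* w α }`. -/
def CFG.langPrefix (G : CFG N T) : Set (List T) :=
  {w | ∃ α, G.Derives [Sum.inl G.start] (w.map Sum.inr ++ α)}

/-- A token is a pair `(t, c) ∈ 𝔗 × Σ*`. -/
abbrev Token (T C : Type*) := T × List C

/-- `p̄`, the characters of a token sequence. -/
def chars (p : List (Token T C)) : List C := (p.map Prod.snd).flatten

/-- `[p]`, the terminals of a token sequence. -/
def terms (p : List (Token T C)) : List T := p.map Prod.fst

/-- `limit f X = ⋃ n, fⁿ(X)`. -/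
def limit {α : Type*} (f : Set α → Set α) (X : Set α) : Set α := ⋃ n, f^[n] X

/-- A local lexing `(Lex, Sel)` with respect to terminals `T` and characters `C`. -/
structure LocalLexing (T C : Type*) where
  Lex : T → List C → ℕ → Set (Token T C)
  Sel : Set (Token T C) → Set (Token T C) → Set (Token T C)
  lex_sound : ∀ t D k, ∀ x ∈ Lex t D k,
      x.1 = t ∧ k + x.2.length ≤ D.length ∧ x.2 <+: D.drop k
  sel_sound : ∀ A B : Set (Token T C), A ⊆ B → A ⊆ Sel A B ∧ Sel A B ⊆ B

variable (G : CFG N T) (ll : LocalLexing T C) (D : List C)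

/-- `𝒳ₖ = { x | x ∈ Lex([x])(D, k) }`. -/
def Xtok (k : ℕ) : Set (Token T C) := {x | x ∈ ll.Lex x.1 D k}

/-- `𝒲` of a path set `P` at position `k`:
`{ x ∈ 𝒳ₖ | ∃ p ∈ P. |p̄| = k ∧ [p x] ∈ ℒ_prefix }`. -/
def Wtok (P : Set (List (Token T C))) (k : ℕ) : Set (Token T C) :=
  {x | x ∈ Xtok ll D k ∧ ∃ p ∈ P, (chars p).length = k ∧ terms (p ++ [x]) ∈ G.langPrefix}

/-- `Appendₖ T P = P ∪ { p t | p ∈ P ∧ |p̄| = k ∧ t ∈ T ∧ [p t] ∈ ℒ_prefix }`. -/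
def Append (k : ℕ) (Ts : Set (Token T C)) (P : Set (List (Token T C))) :
    Set (List (Token T C)) :=
  P ∪ {q | ∃ p ∈ P, ∃ t ∈ Ts, q = p ++ [t] ∧ (chars p).length = k ∧ terms q ∈ G.langPrefix}

/-- The pair `(𝒫ₖᵘ, 𝒵ₖᵘ)`, starting from the path set `P₀` at position `k`:
`𝒵ₖ⁰ = ∅`, `𝒵ₖᵘ⁺¹ = Sel(𝒵ₖᵘ, 𝒲ₖᵘ⁺¹)` and `𝒫ₖᵘ⁺¹ = limit (Appendₖ 𝒵ₖᵘ⁺¹) 𝒫ₖᵘ`. -/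
def Pstage (k : ℕ) (P₀ : Set (List (Token T C))) :
    ℕ → Set (List (Token T C)) × Set (Token T C)
  | 0 => (P₀, ∅)
  | u + 1 =>
      let PZ := Pstage k P₀ u
      let Z := ll.Sel PZ.2 (Wtok G ll D PZ.1 k)
      (limit (Append G k Z) PZ.1, Z)

/-- `𝒫ₖ⁰`:  `𝒫₀⁰ = {ε}` and `𝒫ₖ₊₁⁰ = 𝒫ₖ^∞`. -/
def Pinit : ℕ → Set (List (Token T C))
  | 0 => {[]}
  | k + 1 => ⋃ u, (Pstage G ll D k (Pinit k) u).1

/-- The path sets `𝒫ₖᵘ`. -/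
def Pset (k u : ℕ) : Set (List (Token T C)) := (Pstage G ll D k (Pinit G ll D k) u).1

/-- The selected token sets `𝒵ₖᵘ`. -/
def Zset (k u : ℕ) : Set (Token T C) := (Pstage G ll D k (Pinit G ll D k) u).2

/-- The admissible token sets `𝒲ₖᵘ`. -/
def Wset (k u : ℕ) : Set (Token T C) := Wtok G ll D (Pset G ll D k u) k

/-- `𝒵ₖ^∞ = ⋃ u, 𝒵ₖᵘ`. -/
def Zinf (k : ℕ) : Set (Token T C) := ⋃ u, Zset G ll D k u

/-- `𝕻 = 𝒫_{|D|}^∞`. -/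
def PP : Set (List (Token T C)) := ⋃ u, Pset G ll D D.length u

/-- `ℓℓ(D) = { p ∈ 𝕻 | |p̄| = |D| ∧ [p] ∈ ℒ }`. -/
def sem : Set (List (Token T C)) :=
  {p | p ∈ PP G ll D ∧ (chars p).length = D.length ∧ terms p ∈ G.lang}

/-- An Earley item `(lhs → pre • post, origin, bin)`. -/
structure EItem (N T : Type*) where
  lhs : N
  pre : List (N ⊕ T)
  post : List (N ⊕ T)
  origin : ℕ
  bin : ℕ

/-- `Init = { (𝔖 → • α, 0, 0) | (𝔖 → α) ∈ ℜ }`. -/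
def EInit : Set (EItem N T) :=
  {x | ∃ α, (G.start, α) ∈ G.rules ∧ x = ⟨G.start, [], α, 0, 0⟩}

/-- The `Predict` operator. -/
def Predict (k : ℕ) (I : Set (EItem N T)) : Set (EItem N T) :=
  I ∪ {x | ∃ M γ, (M, γ) ∈ G.rules ∧
        (∃ N' α β i, (⟨N', α, Sum.inl M :: β, i, k⟩ : EItem N T) ∈ I) ∧
        x = ⟨M, [], γ, k, k⟩}

/-- The `Complete` operator. -/
def Complete (k : ℕ) (I : Set (EItem N T)) : Set (EItem N T) :=
  I ∪ {x | ∃ N' α M β i j γ,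
        (⟨N', α, Sum.inl M :: β, i, j⟩ : EItem N T) ∈ I ∧
        (⟨M, γ, [], j, k⟩ : EItem N T) ∈ I ∧
        x = ⟨N', α ++ [Sum.inl M], β, i, k⟩}

/-- The token-based `Scan` operator. -/
def Scan (Ts : Set (Token T C)) (k : ℕ) (I : Set (EItem N T)) : Set (EItem N T) :=
  I ∪ {x | ∃ N' α X c β i, (X, c) ∈ Ts ∧
        (⟨N', α, Sum.inr X :: β, i, k⟩ : EItem N T) ∈ I ∧
        x = ⟨N', α ++ [Sum.inr X], β, i, k + c.length⟩}

/-- `Tokens T k I = Sel(T, { x | ∃ X N α β i. (N → α • X β, i, k) ∈ I ∧ x ∈ Lex(X)(D, k) })`. -/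
def Tokens (Ts : Set (Token T C)) (k : ℕ) (I : Set (EItem N T)) : Set (Token T C) :=
  ll.Sel Ts {x | ∃ X N' α β i, (⟨N', α, Sum.inr X :: β, i, k⟩ : EItem N T) ∈ I ∧
        x ∈ ll.Lex X D k}

/-- `πₖ T I = limit (Scan T k ∘ Complete k ∘ Predict k) I`. -/
def pik (Ts : Set (Token T C)) (k : ℕ) (I : Set (EItem N T)) : Set (EItem N T) :=
  limit (fun J => Scan Ts k (Complete k (Predict G k J))) I

/-- The pair `(𝔍ₖᵘ, 𝒯ₖᵘ)`, starting from the item set `J₀` at position `k`: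
`𝒯ₖ⁰ = ∅`, `𝒯ₖᵘ⁺¹ = Tokens 𝒯ₖᵘ k 𝔍ₖᵘ` and `𝔍ₖᵘ⁺¹ = πₖ 𝒯ₖᵘ⁺¹ 𝔍ₖᵘ`. -/
def Jstage (k : ℕ) (J₀ : Set (EItem N T)) : ℕ → Set (EItem N T) × Set (Token T C)
  | 0 => (J₀, ∅)
  | u + 1 =>
      let JT := Jstage k J₀ u
      let T' := Tokens ll D JT.2 k JT.1
      (pik G T' k JT.1, T')

/-- `𝔍ₖ⁰`:  `𝔍₀⁰ = π₀ ∅ Init` and `𝔍ₖ₊₁⁰ = πₖ₊₁ ∅ 𝓘ₖ`. -/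
def Jinit : ℕ → Set (EItem N T)
  | 0 => pik G (∅ : Set (Token T C)) 0 (EInit G)
  | k + 1 => pik G (∅ : Set (Token T C)) (k + 1) (⋃ u, (Jstage G ll D k (Jinit k) u).1)

/-- The item sets `𝔍ₖᵘ`. -/
def Jset (k u : ℕ) : Set (EItem N T) := (Jstage G ll D k (Jinit G ll D k) u).1

/-- The token sets `𝒯ₖᵘ`. -/
def Tset (k u : ℕ) : Set (Token T C) := (Jstage G ll D k (Jinit G ll D k) u).2

/-- `𝓘ₖ = ⋃ u, 𝔍ₖᵘ`. -/
def Ibin (k : ℕ) : Set (EItem N T) := ⋃ u, Jset G ll D k u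

/-- `𝕴 = 𝓘_{|D|}`. -/
def Items : Set (EItem N T) := Ibin G ll D D.length

/-- An item `(N → α • β, i, j)` is `p`-valid. -/
def pValid (p : List (Token T C)) (x : EItem N T) : Prop :=
  (x.lhs, x.pre ++ x.post) ∈ G.rules ∧
  ∃ u ≤ p.length, ∃ γ,
    (chars p).length = x.bin ∧
    (chars (p.take u)).length = x.origin ∧
    G.Derives [Sum.inl G.start] ((terms (p.take u)).map Sum.inr ++ Sum.inl x.lhs :: γ) ∧
    G.Derives x.pre ((terms (p.drop u)).map Sum.inr)

/-- `⟨P⟩ = { x | ∃ p ∈ P. x is p-valid }`. -/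
def Gen (P : Set (List (Token T C))) : Set (EItem N T) :=
  {x | ∃ p ∈ P, pValid G p x}


/-! ### Auxiliary development for the soundness proof -/

section Soundness
open Sum

/-- Step is preserved by appending on the left. -/
private theorem step_append_left {G : CFG N T} {α β : List (N ⊕ T)} (h : G.Step α β)
    (γ : List (N ⊕ T)) : G.Step (γ ++ α) (γ ++ β) := by
  obtain ⟨a, A, b, δ, h1, h2, h3⟩ := h
  exact ⟨γ ++ a, A, b, δ, by simp [h1], by simp [h2], h3⟩

private theorem step_append_right {G : CFG N T} {α β : List (N ⊕ T)} (h : G.Step α β)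
    (γ : List (N ⊕ T)) : G.Step (α ++ γ) (β ++ γ) := by
  obtain ⟨a, A, b, δ, h1, h2, h3⟩ := h
  exact ⟨a, A, b ++ γ, δ, by simp [h1], by simp [h2], h3⟩

private theorem derives_append {G : CFG N T} {α α' β β' : List (N ⊕ T)}
    (h1 : G.Derives α α') (h2 : G.Derives β β') : G.Derives (α ++ β) (α' ++ β') := by
  have l1 : G.Derives (α ++ β) (α' ++ β) :=
    Relation.ReflTransGen.lift (r := G.Step) (p := G.Step) (· ++ β) (fun a b h => step_append_right h β) _ _ h1
  have l2 : G.Derives (α' ++ β) (α' ++ β') :=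
    Relation.ReflTransGen.lift (r := G.Step) (p := G.Step) (α' ++ ·) (fun a b h => step_append_left h α') _ _ h2
  exact l1.trans l2

/-- Step-counted derivations. -/
private inductive Dn (G : CFG N T) : ℕ → List (N ⊕ T) → List (N ⊕ T) → Prop
  | refl (α) : Dn G 0 α α
  | head {α β γ : List (N ⊕ T)} {n : ℕ} (h : G.Step α β) (hd : Dn G n β γ) : Dn G (n + 1) α γ

private theorem dn_derives {G : CFG N T} : ∀ {n α β}, Dn G n α β → G.Derives α β := by
  intro n α β h
  induction h with
  | refl α => exact Relation.ReflTransGen.refl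
  | head h hd ih => exact Relation.ReflTransGen.head h ih

private theorem dn_tail {G : CFG N T} : ∀ {n α β γ}, Dn G n α β → G.Step β γ → Dn G (n + 1) α γ := by
  intro n α β γ h hs
  induction h with
  | refl α => exact .head hs (.refl _)
  | head h hd ih => exact .head h (ih hs)

private theorem derives_dn {G : CFG N T} {α β : List (N ⊕ T)} (h : G.Derives α β) :
    ∃ n, Dn G n α β := by
  induction h with
  | refl => exact ⟨0, .refl _⟩
  | tail h hs ih => obtain ⟨n, hd⟩ := ih; exact ⟨n + 1, dn_tail hd hs⟩

private theorem dn_trans {G : CFG N T} : ∀ {m n α β γ}, Dn G m α β → Dn G n β γ →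
    Dn G (m + n) α γ := by
  intro m n α β γ h1 h2
  induction h1 with
  | refl α => simpa using h2
  | head h hd ih => exact Nat.succ_add _ _ ▸ .head h (ih h2)

private theorem dn_append_right {G : CFG N T} : ∀ {n a b}, Dn G n a b →
    ∀ c, Dn G n (a ++ c) (b ++ c) := by
  intro n a b h c
  induction h with
  | refl α => exact .refl _
  | head h hd ih => exact .head (step_append_right h c) ih

private theorem dn_append_left {G : CFG N T} : ∀ {n a b}, Dn G n a b →
    ∀ c, Dn G n (c ++ a) (c ++ b) := by
  intro n a b h c
  induction h with
  | refl α => exact .refl _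
  | head h hd ih => exact .head (step_append_left h c) ih

private theorem no_step_terminal {G : CFG N T} {w : List T} {β} (h : G.Step (w.map inr) β) :
    False := by
  obtain ⟨a, A, b, δ, h1, -, -⟩ := h
  have : (inl A : N ⊕ T) ∈ w.map inr := by rw [h1]; simp
  simp at this

private theorem dn_terminal {G : CFG N T} {n : ℕ} {w : List T} {v} (h : Dn G n (w.map inr) v) :
    v = w.map inr := by
  cases h with
  | refl => rfl
  | head h hd => exact absurd h no_step_terminal

private theorem dn_nil {G : CFG N T} {n : ℕ} {v} (h : Dn G n ([] : List (N ⊕ T)) v) :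
    v = [] := dn_terminal (w := []) h

private theorem dn_single_terminal {G : CFG N T} {n : ℕ} {X : T} {v}
    (h : Dn G n ([inr X] : List (N ⊕ T)) v) : v = [inr X] := dn_terminal (w := [X]) h

/-- Splitting a counted derivation across a concatenation. -/
private theorem dn_split {G : CFG N T} : ∀ {n s w}, Dn G n s w → ∀ a b, s = a ++ b →
    ∃ n₁ n₂ w₁ w₂, n₁ + n₂ ≤ n ∧ w = w₁ ++ w₂ ∧ Dn G n₁ a w₁ ∧ Dn G n₂ b w₂ := by
  intro n s w h
  induction h with
  | refl α =>
    rintro a b rfl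
    exact ⟨0, 0, a, b, le_refl _, rfl, .refl a, .refl b⟩
  | head hst hd ih =>
    rintro a b rfl
    obtain ⟨x, A, y, δ, h1, h2, hr⟩ := hst
    subst h2
    rcases List.append_eq_append_iff.mp h1 with ⟨a', hx, hb⟩ | ⟨c', ha, hy⟩
    · subst hx
      obtain ⟨n₁, n₂, w₁, w₂, hle, hw, d1, d2⟩ := ih a (a' ++ δ ++ y) (by simp [List.append_assoc])
      exact ⟨n₁, n₂ + 1, w₁, w₂, by omega, hw, d1, .head ⟨a', A, y, δ, hb, rfl, hr⟩ d2⟩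
    · cases c' with
      | nil =>
        simp only [List.append_nil] at ha
        simp only [List.nil_append] at hy
        obtain ⟨n₁, n₂, w₁, w₂, hle, hw, d1, d2⟩ := ih a (δ ++ y)
          (by rw [ha]; simp [List.append_assoc])
        exact ⟨n₁, n₂ + 1, w₁, w₂, by omega, hw, d1,
          .head ⟨[], A, y, δ, by simp [← hy], by simp, hr⟩ d2⟩
      | cons s₀ t =>
        simp only [List.cons_append] at hy
        injection hy with he1 he2
        subst he1
        subst he2
        subst ha
        obtain ⟨n₁, n₂, w₁, w₂, hle, hw, d1, d2⟩ := ih (x ++ δ ++ t) b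
          (by simp [List.append_assoc])
        exact ⟨n₁ + 1, n₂, w₁, w₂, by omega, hw,
          .head ⟨x, A, t, δ, by simp, by simp [List.append_assoc], hr⟩ d1, d2⟩

private theorem map_split {w : List T} {v₁ v₂ : List (N ⊕ T)} (h : w.map inr = v₁ ++ v₂) :
    ∃ w₁ w₂ : List T, w = w₁ ++ w₂ ∧ v₁ = w₁.map inr ∧ v₂ = w₂.map inr := by
  obtain ⟨l₁, l₂, h1, h2, h3⟩ := List.map_eq_append_iff.mp h
  exact ⟨l₁, l₂, h1, h2.symm, h3.symm⟩

/-- The occurrence lemma: where does a designated occurrence of the symbol `s`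
after a terminal prefix `w` come from. -/
private theorem dn_occ {G : CFG N T} : ∀ {n α} {w : List T} {s : N ⊕ T} {δ},
    Dn G n α (w.map inr ++ s :: δ) →
    (∃ n₁ α₁ β, n₁ ≤ n ∧ α = α₁ ++ s :: β ∧ Dn G n₁ α₁ (w.map inr)) ∨
    (∃ (n₁ n₂ : ℕ) (w₁ w₂ : List T) (M : N) (αl αr δ' : List (N ⊕ T)), n₁ + n₂ < n ∧
      w = w₁ ++ w₂ ∧ (M, αl ++ s :: αr) ∈ G.rules ∧
      Dn G n₁ α (w₁.map inr ++ inl M :: δ') ∧ Dn G n₂ αl (w₂.map inr)) := by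
  intro n α w s δ h
  generalize hW : w.map inr ++ s :: δ = W at h
  induction h with
  | refl α =>
    exact Or.inl ⟨0, w.map inr, δ, le_refl _, hW.symm, .refl _⟩
  | head hst hd ih =>
    rcases ih hW with ⟨n₁, α₁, β, hn, heq, hdn⟩ |
      ⟨n₁, n₂, w₁, w₂, M, αl, αr, δ', hlt, hw, hr2, hd1, hd2⟩
    · obtain ⟨x, A, y, δ₀, hx, hm, hr⟩ := hst
      subst hx
      subst hm
      rw [List.append_assoc] at heq
      -- heq : x ++ (δ₀ ++ y) = α₁ ++ s :: β
      rcases List.append_eq_append_iff.mp heq with ⟨a', hα₁, hrest⟩ | ⟨c', hx', hsβ⟩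
      · rcases List.append_eq_append_iff.mp hrest with ⟨a'', ha', hy⟩ | ⟨c'', hδ₀, hsβ⟩
        · -- occurrence inside y
          subst hy
          refine Or.inl ⟨n₁ + 1, x ++ inl A :: a'', β, by omega, by simp [List.append_assoc], ?_⟩
          refine .head ⟨x, A, a'', δ₀, rfl, rfl, hr⟩ ?_
          rw [hα₁, ha'] at hdn
          simpa [List.append_assoc] using hdn
        · cases c'' with
          | nil =>
            simp only [List.append_nil] at hδ₀
            simp only [List.nil_append] at hsβ
            have hdn' : Dn G n₁ (x ++ δ₀) (List.map inr w) := by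
              rw [hδ₀, ← hα₁]; exact hdn
            exact Or.inl ⟨n₁ + 1, x ++ [inl A], β, by omega,
              by simp [← hsβ, List.append_assoc],
              .head ⟨x, A, [], δ₀, by simp, by simp, hr⟩ hdn'⟩
          | cons s₀ t =>
            simp only [List.cons_append] at hsβ
            injection hsβ with he1 he2
            subst he1
            subst he2
            subst hδ₀
            rw [hα₁] at hdn
            obtain ⟨p₁, p₂, v₁, v₂, hp, hwsplit, d1, d2⟩ := dn_split hdn x a' rfl
            obtain ⟨w₁, w₂, hws, hv₁, hv₂⟩ := map_split hwsplit
            subst hv₁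
            subst hv₂
            refine Or.inr ⟨p₁, p₂, w₁, w₂, A, a', t, y, by omega, hws, hr, ?_, d2⟩
            exact dn_append_right d1 (inl A :: y)
      · cases c' with
        | nil =>
          simp only [List.append_nil] at hx'
          simp only [List.nil_append] at hsβ
          cases δ₀ with
          | nil =>
            simp only [List.nil_append] at hsβ
            have hdn' : Dn G n₁ x (List.map inr w) := by rw [hx']; exact hdn
            exact Or.inl ⟨n₁ + 1, x ++ [inl A], β, by omega,
              by simp [← hsβ, List.append_assoc],
              .head ⟨x, A, [], [], by simp, by simp, hr⟩ hdn'⟩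
          | cons s₀ t =>
            simp only [List.cons_append] at hsβ
            injection hsβ with he1 he2
            subst he1
            refine Or.inr ⟨n₁, 0, w, [], A, [], t, y, by omega, by simp, hr, ?_, .refl _⟩
            rw [← hx'] at hdn
            exact dn_append_right hdn (inl A :: y)
        | cons s₀ t =>
          simp only [List.cons_append] at hsβ
          injection hsβ with he1 he2
          subst he1
          subst he2
          subst hx'
          exact Or.inl ⟨n₁, α₁, t ++ inl A :: y, by omega, by simp [List.append_assoc], hdn⟩
    · exact Or.inr ⟨n₁ + 1, n₂, w₁, w₂, M, αl, αr, δ', by omega, hw, hr2, .head hst hd1, hd2⟩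


/-! ### terms/chars basics -/

private theorem terms_append (a b : List (Token T C)) : terms (a ++ b) = terms a ++ terms b := by
  simp [terms]

private theorem chars_append (a b : List (Token T C)) : chars (a ++ b) = chars a ++ chars b := by
  simp [chars]

private theorem terms_take (p : List (Token T C)) (n : ℕ) :
    terms (p.take n) = (terms p).take n := by
  simp [terms, List.map_take]

private theorem terms_drop (p : List (Token T C)) (n : ℕ) :
    terms (p.drop n) = (terms p).drop n := by
  simp [terms, List.map_drop]

private theorem length_terms (p : List (Token T C)) : (terms p).length = p.length := by
  simp [terms]

private theorem chars_take_drop (p : List (Token T C)) (n : ℕ) :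
    (chars (p.take n)).length + (chars (p.drop n)).length = (chars p).length := by
  conv_rhs => rw [← List.take_append_drop n p]
  rw [chars_append]
  simp

private theorem chars_take_le (p : List (Token T C)) (n : ℕ) :
    (chars (p.take n)).length ≤ (chars p).length := by
  have := chars_take_drop p n
  omega

/-! ### Path set lemmas -/

private theorem mem_limit {α : Type*} {f : Set α → Set α} {X : Set α} {x : α} :
    x ∈ limit f X ↔ ∃ n, x ∈ f^[n] X := Set.mem_iUnion

private theorem subset_limit {α : Type*} (f : Set α → Set α) (X : Set α) : X ⊆ limit f X :=
  fun x hx => mem_limit.mpr ⟨0, hx⟩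

private theorem Pset_succ (k u : ℕ) :
    Pset G ll D k (u + 1) = limit (Append G k (Zset G ll D k (u + 1))) (Pset G ll D k u) := rfl

private theorem Zset_zero (k : ℕ) : Zset G ll D k 0 = ∅ := rfl

private theorem Zset_succ (k u : ℕ) :
    Zset G ll D k (u + 1) = ll.Sel (Zset G ll D k u) (Wtok G ll D (Pset G ll D k u) k) := rfl

private theorem Pset_zero_succ (k : ℕ) : Pset G ll D (k + 1) 0 = ⋃ u, Pset G ll D k u := rfl

private theorem Pset_zero_zero : Pset G ll D 0 0 = {[]} := rfl

private theorem mem_append_op {k : ℕ} {Ts : Set (Token T C)} {P : Set (List (Token T C))}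
    {p : List (Token T C)} {t : Token T C} (hp : p ∈ P) (ht : t ∈ Ts)
    (hc : (chars p).length = k) (hl : terms (p ++ [t]) ∈ G.langPrefix) :
    p ++ [t] ∈ Append G k Ts P :=
  Or.inr ⟨p, hp, t, ht, rfl, hc, hl⟩

private theorem append_op_cases {k : ℕ} {Ts : Set (Token T C)} {P : Set (List (Token T C))}
    {q : List (Token T C)} (h : q ∈ Append G k Ts P) :
    q ∈ P ∨ ∃ p ∈ P, ∃ t ∈ Ts, q = p ++ [t] ∧ (chars p).length = k ∧
      terms q ∈ G.langPrefix := h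

private theorem Pmono_u (k : ℕ) {u u' : ℕ} (h : u ≤ u') :
    Pset G ll D k u ⊆ Pset G ll D k u' := by
  induction u' with
  | zero => cases Nat.le_zero.mp h; exact subset_rfl
  | succ u' ih =>
    rcases Nat.lt_or_ge u (u' + 1) with h' | h'
    · exact (ih (by omega)).trans (by rw [Pset_succ]; exact subset_limit _ _)
    · have : u = u' + 1 := by omega
      subst this; exact subset_rfl

private theorem Pset_le_zero : ∀ {k k' : ℕ}, k < k' → ∀ u, Pset G ll D k u ⊆ Pset G ll D k' 0 := by
  intro k k' h
  induction k' with
  | zero => omega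
  | succ k' ih =>
    intro u
    rcases Nat.lt_or_ge k k' with h' | h'
    · refine ((ih h' u).trans ?_)
      rw [Pset_zero_succ]
      exact Set.subset_iUnion (fun v => Pset G ll D k' v) 0
    · have : k = k' := by omega
      subst this
      rw [Pset_zero_succ]
      exact Set.subset_iUnion (fun v => Pset G ll D k v) u

private theorem Wtok_mono {P P' : Set (List (Token T C))} (h : P ⊆ P') (k : ℕ) :
    Wtok G ll D P k ⊆ Wtok G ll D P' k := by
  rintro x ⟨h1, p, hp, h2, h3⟩
  exact ⟨h1, p, h hp, h2, h3⟩

private theorem Zset_sub_W (k : ℕ) : ∀ u, Zset G ll D k u ⊆ Wtok G ll D (Pset G ll D k u) k := by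
  intro u
  induction u with
  | zero => rw [Zset_zero]; exact Set.empty_subset _
  | succ u ih =>
    rw [Zset_succ]
    exact ((ll.sel_sound _ _ ih).2).trans (Wtok_mono G ll D (Pmono_u G ll D k (Nat.le_succ u)) k)

private theorem Zmono (k : ℕ) {u u' : ℕ} (h : u ≤ u') :
    Zset G ll D k u ⊆ Zset G ll D k u' := by
  induction u' with
  | zero => cases Nat.le_zero.mp h; exact subset_rfl
  | succ u' ih =>
    rcases Nat.lt_or_ge u (u' + 1) with h' | h'
    · refine (ih (by omega)).trans ?_
      rw [Zset_succ]
      exact (ll.sel_sound _ _ (Zset_sub_W G ll D k u')).1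
    · have : u = u' + 1 := by omega
      subst this; exact subset_rfl

private theorem Pset_append {k u : ℕ} {p : List (Token T C)} {z : Token T C}
    (hp : p ∈ Pset G ll D k (u + 1)) (hz : z ∈ Zset G ll D k (u + 1))
    (hc : (chars p).length = k) (hl : terms (p ++ [z]) ∈ G.langPrefix) :
    p ++ [z] ∈ Pset G ll D k (u + 1) := by
  rw [Pset_succ] at hp ⊢
  obtain ⟨n, hn⟩ := mem_limit.mp hp
  refine mem_limit.mpr ⟨n + 1, ?_⟩
  rw [Function.iterate_succ_apply']
  exact mem_append_op G hn hz hc hl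

/-- Path sets are closed under taking prefixes. -/
private theorem Pset_take_aux (k u : ℕ)
    (ih : ∀ p, p ∈ Pset G ll D k u → ∀ m, p.take m ∈ Pset G ll D k u) :
    ∀ p, p ∈ Pset G ll D k (u + 1) → ∀ m, p.take m ∈ Pset G ll D k (u + 1) := by
  have key : ∀ n p, p ∈ (Append G k (Zset G ll D k (u + 1)))^[n] (Pset G ll D k u) →
      ∀ m, p.take m ∈ Pset G ll D k (u + 1) := by
    intro n
    induction n with
    | zero =>
      intro p hn m
      exact (Pset_succ G ll D k u) ▸ subset_limit _ _ (ih p hn m)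
    | succ n ihn =>
      intro p hn m
      rw [Function.iterate_succ_apply'] at hn
      rcases append_op_cases G hn with hn' | ⟨q, hq, t, ht, rfl, hc, hl⟩
      · exact ihn p hn' m
      · rcases le_or_gt m q.length with hm | hm
        · rw [List.take_append_of_le_length hm]
          exact ihn q hq m
        · rw [List.take_of_length_le (by simp; omega)]
          rw [Pset_succ]
          refine mem_limit.mpr ⟨n + 1, ?_⟩
          rw [Function.iterate_succ_apply']
          exact mem_append_op G hq ht hc hl
  intro p hp m
  rw [Pset_succ] at hp
  obtain ⟨n, hn⟩ := mem_limit.mp hp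
  exact key n p hn m

private theorem Pset_take : ∀ k u p, p ∈ Pset G ll D k u → ∀ m,
    p.take m ∈ Pset G ll D k u := by
  intro k
  induction k with
  | zero =>
    intro u
    induction u with
    | zero =>
      intro p hp m
      have hp' : p = [] := hp
      subst hp'
      simp only [List.take_nil]
      exact rfl
    | succ u ihu => exact Pset_take_aux G ll D 0 u ihu
  | succ k ihk =>
    intro u
    induction u with
    | zero =>
      intro p hp m
      rw [Pset_zero_succ] at hp ⊢
      obtain ⟨v, hv⟩ := Set.mem_iUnion.mp hp
      exact Set.mem_iUnion.mpr ⟨v, ihk v p hv m⟩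
    | succ u ihu => exact Pset_take_aux G ll D (k + 1) u ihu

/-- A path that is shorter (in characters) than the ambient position belongs to the
path sets of its own character length. -/
private theorem Pset_short : ∀ k u p, p ∈ Pset G ll D k u → (chars p).length < k →
    ∃ v, p ∈ Pset G ll D (chars p).length v := by
  intro k
  induction k with
  | zero => intro u p _ h; omega
  | succ k ihk =>
    intro u
    induction u with
    | zero =>
      intro p hp h
      rw [Pset_zero_succ] at hp
      obtain ⟨v, hv⟩ := Set.mem_iUnion.mp hp
      rcases Nat.lt_or_ge (chars p).length k with h' | h'
      · exact ihk v p hv h'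
      · have hk : (chars p).length = k := by omega
        rw [hk]
        exact ⟨v, hv⟩
    | succ u ihu =>
      have key : ∀ n p, p ∈ (Append G (k + 1) (Zset G ll D (k + 1) (u + 1)))^[n]
          (Pset G ll D (k + 1) u) → (chars p).length < k + 1 →
          ∃ v, p ∈ Pset G ll D (chars p).length v := by
        intro n
        induction n with
        | zero => exact ihu
        | succ n ihn =>
          intro p hn h
          rw [Function.iterate_succ_apply'] at hn
          rcases append_op_cases G hn with hn' | ⟨q, hq, t, ht, rfl, hc, hl⟩
          · exact ihn p hn' h
          · rw [chars_append] at h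
            simp at h
            omega
      intro p hp h
      rw [Pset_succ] at hp
      obtain ⟨n, hn⟩ := mem_limit.mp hp
      exact key n p hn h

/-- Structure of tokens inside a path. -/
private theorem Pset_tok_aux (k u : ℕ)
    (ihu : ∀ p, p ∈ Pset G ll D k u → ∀ i z r, p.drop i = z :: r →
      (chars (p.take i)).length ≤ k ∧
      (∃ v, z ∈ Zset G ll D (chars (p.take i)).length v) ∧
      ((chars (p.take i)).length = k → z ∈ Zset G ll D k u)) :
    ∀ p, p ∈ Pset G ll D k (u + 1) → ∀ i z r, p.drop i = z :: r →
      (chars (p.take i)).length ≤ k ∧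
      (∃ v, z ∈ Zset G ll D (chars (p.take i)).length v) ∧
      ((chars (p.take i)).length = k → z ∈ Zset G ll D k (u + 1)) := by
  have key : ∀ n p, p ∈ (Append G k (Zset G ll D k (u + 1)))^[n] (Pset G ll D k u) →
      ∀ i z r, p.drop i = z :: r →
      (chars (p.take i)).length ≤ k ∧
      (∃ v, z ∈ Zset G ll D (chars (p.take i)).length v) ∧
      ((chars (p.take i)).length = k → z ∈ Zset G ll D k (u + 1)) := by
    intro n
    induction n with
    | zero =>
      intro p hn i z r hd
      obtain ⟨h1, h2, h3⟩ := ihu p hn i z r hd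
      exact ⟨h1, h2, fun hk => Zmono G ll D k (Nat.le_succ u) (h3 hk)⟩
    | succ n ihn =>
      intro p hn i z r hd
      rw [Function.iterate_succ_apply'] at hn
      rcases append_op_cases G hn with hn' | ⟨q, hq, t, ht, rfl, hc, hl⟩
      · exact ihn p hn' i z r hd
      · rcases Nat.lt_trichotomy i q.length with hi | hi | hi
        · rw [List.drop_append_of_le_length (le_of_lt hi)] at hd
          rw [List.take_append_of_le_length (le_of_lt hi)]
          rcases hq' : q.drop i with _ | ⟨z', r'⟩
          · exfalso
            have := List.drop_eq_nil_iff.mp hq'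
            omega
          · rw [hq'] at hd
            injection hd with hz hr
            exact hz ▸ ihn q hq i z' r' hq'
        · subst hi
          rw [List.drop_append_of_le_length (le_refl _)] at hd
          simp at hd
          rw [List.take_append_of_le_length (le_refl _), List.take_of_length_le (le_refl _)]
          obtain ⟨rfl, -⟩ := hd
          exact ⟨le_of_eq hc, ⟨u + 1, hc ▸ ht⟩, fun _ => ht⟩
        · exfalso
          have hlen : (q ++ [t]).length ≤ i := by simp; omega
          rw [List.drop_eq_nil_iff.mpr hlen] at hd
          simp at hd
  intro p hp
  rw [Pset_succ] at hp
  obtain ⟨n, hn⟩ := mem_limit.mp hp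
  exact key n p hn

private theorem Pset_tok : ∀ k u p, p ∈ Pset G ll D k u → ∀ i z r, p.drop i = z :: r →
    (chars (p.take i)).length ≤ k ∧
    (∃ v, z ∈ Zset G ll D (chars (p.take i)).length v) ∧
    ((chars (p.take i)).length = k → z ∈ Zset G ll D k u) := by
  intro k
  induction k with
  | zero =>
    intro u
    induction u with
    | zero =>
      intro p hp i z r hd
      have hp' : p = [] := hp
      subst hp'
      simp at hd
    | succ u ihu => exact Pset_tok_aux G ll D 0 u ihu
  | succ k ihk =>
    intro u
    induction u with
    | zero =>
      intro p hp i z r hd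
      rw [Pset_zero_succ] at hp
      obtain ⟨v, hv⟩ := Set.mem_iUnion.mp hp
      obtain ⟨h1, h2, h3⟩ := ihk v p hv i z r hd
      exact ⟨by omega, h2, fun hk => by omega⟩
    | succ u ihu => exact Pset_tok_aux G ll D (k + 1) u ihu


/-! ### Item set lemmas -/

private theorem Jset_succ (k u : ℕ) :
    Jset G ll D k (u + 1) = pik G (Tset G ll D k (u + 1)) k (Jset G ll D k u) := rfl

private theorem Tset_succ (k u : ℕ) :
    Tset G ll D k (u + 1) = Tokens ll D (Tset G ll D k u) k (Jset G ll D k u) := rfl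

private theorem Tset_zero (k : ℕ) : Tset G ll D k 0 = ∅ := rfl

private theorem Jset_zero_zero : Jset G ll D 0 0 = pik G (∅ : Set (Token T C)) 0 (EInit G) := rfl

private theorem Jset_zero_succ (k : ℕ) :
    Jset G ll D (k + 1) 0 = pik G (∅ : Set (Token T C)) (k + 1) (⋃ u, Jset G ll D k u) := rfl

private theorem Tokens_def (Ts : Set (Token T C)) (k : ℕ) (I : Set (EItem N T)) :
    Tokens ll D Ts k I = ll.Sel Ts {x | ∃ X N' α β i,
      (⟨N', α, Sum.inr X :: β, i, k⟩ : EItem N T) ∈ I ∧ x ∈ ll.Lex X D k} := rfl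

private theorem predict_sub (k : ℕ) (I : Set (EItem N T)) : I ⊆ Predict G k I :=
  Set.subset_union_left

private theorem complete_sub (k : ℕ) (I : Set (EItem N T)) : I ⊆ Complete k I :=
  Set.subset_union_left

private theorem scan_sub (Ts : Set (Token T C)) (k : ℕ) (I : Set (EItem N T)) :
    I ⊆ Scan Ts k I := Set.subset_union_left

private theorem predict_mono {k : ℕ} {I I' : Set (EItem N T)} (h : I ⊆ I') :
    Predict G k I ⊆ Predict G k I' := by
  rintro x (hx | ⟨M, γ, h1, ⟨N', α, β, i, h2⟩, rfl⟩)
  · exact Or.inl (h hx)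
  · exact Or.inr ⟨M, γ, h1, ⟨N', α, β, i, h h2⟩, rfl⟩

private theorem complete_mono {k : ℕ} {I I' : Set (EItem N T)} (h : I ⊆ I') :
    Complete k I ⊆ Complete k I' := by
  rintro x (hx | ⟨N', α, M, β, i, j, γ, h1, h2, rfl⟩)
  · exact Or.inl (h hx)
  · exact Or.inr ⟨N', α, M, β, i, j, γ, h h1, h h2, rfl⟩

private theorem scan_mono {Ts : Set (Token T C)} {k : ℕ} {I I' : Set (EItem N T)} (h : I ⊆ I') :
    Scan Ts k I ⊆ Scan Ts k I' := by
  rintro x (hx | ⟨N', α, X, c, β, i, h1, h2, rfl⟩)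
  · exact Or.inl (h hx)
  · exact Or.inr ⟨N', α, X, c, β, i, h1, h h2, rfl⟩

private theorem pikF_sub (Ts : Set (Token T C)) (k : ℕ) (I : Set (EItem N T)) :
    I ⊆ Scan Ts k (Complete k (Predict G k I)) :=
  ((predict_sub G k I).trans (complete_sub k _)).trans (scan_sub Ts k _)

private theorem pikF_mono {Ts : Set (Token T C)} {k : ℕ} {I I' : Set (EItem N T)} (h : I ⊆ I') :
    Scan Ts k (Complete k (Predict G k I)) ⊆ Scan Ts k (Complete k (Predict G k I')) :=
  scan_mono (complete_mono (predict_mono G h))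

private theorem pik_chain (Ts : Set (Token T C)) (k : ℕ) (X : Set (EItem N T)) :
    ∀ {n m : ℕ}, n ≤ m →
    (fun J => Scan Ts k (Complete k (Predict G k J)))^[n] X ⊆
    (fun J => Scan Ts k (Complete k (Predict G k J)))^[m] X := by
  have step : ∀ n, (fun J => Scan Ts k (Complete k (Predict G k J)))^[n] X ⊆
      (fun J => Scan Ts k (Complete k (Predict G k J)))^[n + 1] X := by
    intro n
    induction n with
    | zero => exact pikF_sub G Ts k X
    | succ n ih =>
      rw [Function.iterate_succ_apply', Function.iterate_succ_apply']
      exact pikF_mono G ih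
  intro n m h
  induction m with
  | zero => cases Nat.le_zero.mp h; exact subset_rfl
  | succ m ih =>
    rcases Nat.lt_or_ge n (m + 1) with h' | h'
    · exact (ih (by omega)).trans (step m)
    · have : n = m + 1 := by omega
      subst this; exact subset_rfl

private theorem pik_sub (Ts : Set (Token T C)) (k : ℕ) (X : Set (EItem N T)) :
    X ⊆ pik G Ts k X := subset_limit _ _

private theorem pik_closed_predict (Ts : Set (Token T C)) (k : ℕ) (X : Set (EItem N T)) :
    Predict G k (pik G Ts k X) ⊆ pik G Ts k X := by
  rintro x (hx | ⟨M, γ, h1, ⟨N', α, β, i, h2⟩, rfl⟩)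
  · exact hx
  · obtain ⟨n, hn⟩ := mem_limit.mp h2
    refine mem_limit.mpr ⟨n + 1, ?_⟩
    rw [Function.iterate_succ_apply']
    exact scan_sub Ts k _ (complete_sub k _ (Or.inr ⟨M, γ, h1, ⟨N', α, β, i, hn⟩, rfl⟩))

private theorem pik_closed_complete (Ts : Set (Token T C)) (k : ℕ) (X : Set (EItem N T)) :
    Complete k (pik G Ts k X) ⊆ pik G Ts k X := by
  rintro x (hx | ⟨N', α, M, β, i, j, γ, h1, h2, rfl⟩)
  · exact hx
  · obtain ⟨n₁, hn₁⟩ := mem_limit.mp h1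
    obtain ⟨n₂, hn₂⟩ := mem_limit.mp h2
    refine mem_limit.mpr ⟨max n₁ n₂ + 1, ?_⟩
    rw [Function.iterate_succ_apply']
    refine scan_sub Ts k _ (Or.inr ⟨N', α, M, β, i, j, γ,
      predict_sub G k _ (pik_chain G Ts k X (le_max_left n₁ n₂) hn₁),
      predict_sub G k _ (pik_chain G Ts k X (le_max_right n₁ n₂) hn₂), rfl⟩)

private theorem pik_closed_scan (Ts : Set (Token T C)) (k : ℕ) (X : Set (EItem N T)) :
    Scan Ts k (pik G Ts k X) ⊆ pik G Ts k X := by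
  rintro x (hx | ⟨N', α, X', c, β, i, h1, h2, rfl⟩)
  · exact hx
  · obtain ⟨n, hn⟩ := mem_limit.mp h2
    refine mem_limit.mpr ⟨n + 1, ?_⟩
    rw [Function.iterate_succ_apply']
    exact Or.inr ⟨N', α, X', c, β, i, h1, complete_sub k _ (predict_sub G k _ hn), rfl⟩

private theorem Jset_closed_predict (k u : ℕ) :
    Predict G k (Jset G ll D k u) ⊆ Jset G ll D k u := by
  cases u with
  | zero =>
    cases k with
    | zero => rw [Jset_zero_zero]; exact pik_closed_predict G _ _ _
    | succ k => rw [Jset_zero_succ]; exact pik_closed_predict G _ _ _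
  | succ u => rw [Jset_succ]; exact pik_closed_predict G _ _ _

private theorem Jset_closed_complete (k u : ℕ) :
    Complete k (Jset G ll D k u) ⊆ Jset G ll D k u := by
  cases u with
  | zero =>
    cases k with
    | zero => rw [Jset_zero_zero]; exact pik_closed_complete G _ _ _
    | succ k => rw [Jset_zero_succ]; exact pik_closed_complete G _ _ _
  | succ u => rw [Jset_succ]; exact pik_closed_complete G _ _ _

private theorem Jset_closed_scan (k u : ℕ) :
    Scan (Tset G ll D k u) k (Jset G ll D k u) ⊆ Jset G ll D k u := by
  cases u with
  | zero =>
    rw [Tset_zero]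
    rintro x (hx | ⟨N', α, X, c, β, i, h1, h2, rfl⟩)
    · exact hx
    · cases h1
  | succ u => rw [Jset_succ]; exact pik_closed_scan G _ _ _

private theorem Jmono_u (k : ℕ) {u u' : ℕ} (h : u ≤ u') :
    Jset G ll D k u ⊆ Jset G ll D k u' := by
  induction u' with
  | zero => cases Nat.le_zero.mp h; exact subset_rfl
  | succ u' ih =>
    rcases Nat.lt_or_ge u (u' + 1) with h' | h'
    · exact (ih (by omega)).trans (by rw [Jset_succ]; exact pik_sub G _ _ _)
    · have : u = u' + 1 := by omega
      subst this; exact subset_rfl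

private theorem Jset_le_zero : ∀ {k k' : ℕ}, k < k' → ∀ u, Jset G ll D k u ⊆ Jset G ll D k' 0 := by
  intro k k' h
  induction k' with
  | zero => omega
  | succ k' ih =>
    intro u
    rcases Nat.lt_or_ge k k' with h' | h'
    · refine (ih h' u).trans ?_
      rw [Jset_zero_succ]
      exact (Set.subset_iUnion (fun v => Jset G ll D k' v) 0).trans (pik_sub G _ _ _)
    · have : k = k' := by omega
      subst this
      rw [Jset_zero_succ]
      exact (Set.subset_iUnion (fun v => Jset G ll D k v) u).trans (pik_sub G _ _ _)


/-! ### Splicing paths -/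

private theorem splice (k w : ℕ) : ∀ (q₂ p : List (Token T C)), p ∈ Pset G ll D k w →
    (∀ m z r, q₂.drop m = z :: r →
      (chars (p ++ q₂.take m)).length ≤ k ∧
      (∃ v, z ∈ Zset G ll D (chars (p ++ q₂.take m)).length v) ∧
      ((chars (p ++ q₂.take m)).length = k → z ∈ Zset G ll D k w) ∧
      terms (p ++ q₂.take (m + 1)) ∈ G.langPrefix) →
    p ++ q₂ ∈ Pset G ll D k w := by
  intro q₂
  induction q₂ with
  | nil =>
    intro p hp _
    simpa using hp
  | cons z q₂ ih =>
    intro p hp hcond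
    obtain ⟨h1, ⟨v, h2⟩, h3, h4⟩ := hcond 0 z q₂ rfl
    simp only [List.take_zero, List.append_nil] at h1 h2 h3
    have h4' : terms (p ++ [z]) ∈ G.langPrefix := by
      simpa using h4
    have hstep : p ++ [z] ∈ Pset G ll D k w := by
      rcases Nat.lt_or_ge (chars p).length k with hlt | hge
      · obtain ⟨v', hv'⟩ := Pset_short G ll D k w p hp hlt
        have hmem : p ++ [z] ∈ Pset G ll D (chars p).length (max v v' + 1) := by
          refine Pset_append G ll D ?_ ?_ rfl h4'
          · exact Pmono_u G ll D _ (le_trans (le_max_right v v') (Nat.le_succ _)) hv'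
          · exact Zmono G ll D _ (le_trans (le_max_left v v') (Nat.le_succ _)) h2
        exact Pmono_u G ll D k (Nat.zero_le w) (Pset_le_zero G ll D hlt _ hmem)
      · have hk : (chars p).length = k := by omega
        have hz := h3 hk
        cases w with
        | zero => rw [Zset_zero] at hz; cases hz
        | succ w' => exact Pset_append G ll D hp hz hk h4'
    have hres := ih (p ++ [z]) hstep ?_
    · simpa [List.append_assoc] using hres
    · intro m z' r hd
      obtain ⟨g1, g2, g3, g4⟩ := hcond (m + 1) z' r (by simpa using hd)
      have e1 : (p ++ [z]) ++ q₂.take m = p ++ (z :: q₂).take (m + 1) := by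
        simp [List.take_succ_cons, List.append_assoc]
      have e2 : (p ++ [z]) ++ q₂.take (m + 1) = p ++ (z :: q₂).take (m + 2) := by
        simp [List.take_succ_cons, List.append_assoc]
      rw [e1, e2]
      exact ⟨g1, g2, g3, g4⟩

/-! ### Soundness of the item operations -/

private theorem derives_step {G : CFG N T} {A : N} {γ : List (N ⊕ T)}
    (hrule : (A, γ) ∈ G.rules) (a b : List (N ⊕ T)) :
    G.Derives (a ++ inl A :: b) (a ++ γ ++ b) :=
  Relation.ReflTransGen.single ⟨a, A, b, γ, rfl, rfl, hrule⟩

/-- Expand the nonterminal `N'` after prefix `A` using a rule and a derivation of its `pre`. -/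
private theorem derives_expand {G : CFG N T} {A γ₁ pre post B : List (N ⊕ T)} {N' : N}
    (hS : G.Derives [inl G.start] (A ++ inl N' :: γ₁)) (hr : (N', pre ++ post) ∈ G.rules)
    (hpre : G.Derives pre B) :
    G.Derives [inl G.start] (A ++ (B ++ (post ++ γ₁))) := by
  refine hS.trans ?_
  have s1 : G.Derives (A ++ inl N' :: γ₁) (A ++ (pre ++ post) ++ γ₁) := derives_step hr A γ₁
  refine s1.trans ?_
  have s2 : G.Derives ((A ++ pre) ++ (post ++ γ₁)) ((A ++ B) ++ (post ++ γ₁)) :=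
    derives_append (derives_append (Relation.ReflTransGen.refl) hpre)
      (Relation.ReflTransGen.refl)
  have e1 : A ++ (pre ++ post) ++ γ₁ = (A ++ pre) ++ (post ++ γ₁) := by
    simp [List.append_assoc]
  have e2 : (A ++ B) ++ (post ++ γ₁) = A ++ (B ++ (post ++ γ₁)) := by
    simp [List.append_assoc]
  rw [e1, ← e2]
  exact s2

private theorem take_drop_assoc {α : Type*} (n : ℕ) (l t : List α) :
    l.take n ++ (l.drop n ++ t) = l ++ t := by
  rw [← List.append_assoc, List.take_append_drop]

private theorem terms_take_drop_map (p : List (Token T C)) (u₁ : ℕ) :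
    (terms (p.take u₁)).map (inr : T → N ⊕ T) ++ (terms (p.drop u₁)).map inr =
    (terms p).map inr := by
  rw [← List.map_append, ← terms_append, List.take_append_drop]

/-- `Good I P`: every item of `I` is `p`-valid for some `p ∈ P`. -/
private def Good (I : Set (EItem N T)) (P : Set (List (Token T C))) : Prop :=
  ∀ x ∈ I, ∃ p ∈ P, pValid G p x

private theorem sound_predict {k w : ℕ} {I : Set (EItem N T)}
    (h : Good G I (Pset G ll D k w)) : Good G (Predict G k I) (Pset G ll D k w) := by
  rintro x (hx | ⟨M, γ, hrule, ⟨N', α, β, i, hitem⟩, rfl⟩)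
  · exact h x hx
  · obtain ⟨p, hp, hr1, u₁, hu₁, γ₁, hbin, hor, hS, hpre⟩ := h _ hitem
    refine ⟨p, hp, by simpa using hrule, p.length, le_refl _, β ++ γ₁, hbin, ?_, ?_, ?_⟩
    · rw [List.take_length]; exact hbin
    · rw [List.take_length]
      have hexp := derives_expand hS hr1 hpre
      have e : (terms (p.take u₁)).map inr ++ ((terms (p.drop u₁)).map inr ++
          ((inl M :: β) ++ γ₁)) = (terms p).map inr ++ inl M :: (β ++ γ₁) := by
        rw [← terms_take_drop_map p u₁]
        simp [List.append_assoc]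
      rw [e] at hexp
      exact hexp
    · rw [List.drop_length]
      exact Relation.ReflTransGen.refl

private theorem sound_scan {k w : ℕ} {Ts : Set (Token T C)} {I : Set (EItem N T)}
    (happ : ∀ p z, p ∈ Pset G ll D k w → z ∈ Ts → (chars p).length = k →
      terms (p ++ [z]) ∈ G.langPrefix → p ++ [z] ∈ Pset G ll D k w)
    (h : Good G I (Pset G ll D k w)) : Good G (Scan Ts k I) (Pset G ll D k w) := by
  rintro x (hx | ⟨N', α, X, c, β, i, ht, hitem, rfl⟩)
  · exact h x hx
  · obtain ⟨p, hp, hr1, u₁, hu₁, γ₁, hbin, hor, hS, hpre⟩ := h _ hitem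
    have hexp := derives_expand hS hr1 hpre
    have e : (terms (p.take u₁)).map inr ++ ((terms (p.drop u₁)).map inr ++
        ((inr X :: β) ++ γ₁)) = (terms (p ++ [(X, c)])).map inr ++ (β ++ γ₁) := by
      have h1 : terms (p ++ [(X, c)]) = terms p ++ [X] := by simp [terms]
      rw [h1, List.map_append, ← terms_take_drop_map p u₁]
      simp [List.append_assoc, take_drop_assoc]
    rw [e] at hexp
    have hlang : terms (p ++ [(X, c)]) ∈ G.langPrefix := ⟨β ++ γ₁, hexp⟩
    have hp' := happ p (X, c) hp ht hbin hlang
    refine ⟨p ++ [(X, c)], hp', by simpa [List.append_assoc] using hr1,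
      u₁, le_trans hu₁ (by simp), γ₁, ?_, ?_, ?_, ?_⟩
    · rw [chars_append, List.length_append, hbin]
      simp [chars]
    · rw [List.take_append_of_le_length hu₁]
      exact hor
    · rw [List.take_append_of_le_length hu₁]
      exact hS
    · rw [List.drop_append_of_le_length hu₁, terms_append]
      have : ((terms (p.drop u₁) ++ terms [(X, c)]).map (inr : T → N ⊕ T)) =
          (terms (p.drop u₁)).map inr ++ [inr X] := by simp [terms]
      rw [this]
      exact derives_append hpre (Relation.ReflTransGen.refl)

private theorem sound_complete {k w : ℕ} {I : Set (EItem N T)}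
    (h : Good G I (Pset G ll D k w)) : Good G (Complete k I) (Pset G ll D k w) := by
  rintro x (hx | ⟨N', α, M, β, i, j, γ, hit1, hit2, rfl⟩)
  · exact h x hx
  · obtain ⟨p₁, hp₁, hr1, u₁, hu₁, γ₁, hb₁, ho₁, hS₁, hpre₁⟩ := h _ hit1
    obtain ⟨q, hq, hr2, u₂, hu₂, γ₂, hb₂, ho₂, hS₂, hpre₂⟩ := h _ hit2
    dsimp only at hr1 hb₁ ho₁ hS₁ hpre₁ hr2 hb₂ ho₂ hS₂ hpre₂
    simp only [List.append_nil] at hr2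
    -- the spliced path
    have hM : G.Derives [inl M] ((terms (q.drop u₂)).map inr) := by
      refine Relation.ReflTransGen.head (b := γ) ⟨[], M, [], γ, by simp, by simp, hr2⟩ hpre₂
    -- big sentential form for langPrefix conditions
    have hexp1 := derives_expand hS₁ hr1 hpre₁
    have e1 : (terms (p₁.take u₁)).map inr ++ ((terms (p₁.drop u₁)).map inr ++
        ((inl M :: β) ++ γ₁)) = (terms p₁).map inr ++ inl M :: (β ++ γ₁) := by
      rw [← terms_take_drop_map p₁ u₁]
      simp [List.append_assoc]
    rw [e1] at hexp1
    have hexp2 : G.Derives [inl G.start] ((terms p₁).map inr ++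
        (((terms (q.drop u₂)).map inr) ++ (β ++ γ₁))) := by
      have := derives_expand (pre := γ) (post := []) hexp1 (by simpa using hr2) hpre₂
      simpa using this
    have hsplice := splice G ll D k w (q.drop u₂) p₁ hp₁ ?_
    swap
    · intro m z r hd
      rw [List.drop_drop] at hd
      have htok := Pset_tok G ll D k w q hq (u₂ + m) z r hd
      have etake : q.take (u₂ + m) = q.take u₂ ++ (q.drop u₂).take m := List.take_add (l := q) (i := u₂) (j := m)
      have echar : (chars (p₁ ++ (q.drop u₂).take m)).length =
          (chars (q.take (u₂ + m))).length := by
        rw [etake, chars_append, chars_append, List.length_append, List.length_append, ho₂, hb₁]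
      obtain ⟨g1, g2, g3⟩ := htok
      refine ⟨echar ▸ g1, echar ▸ g2, echar ▸ g3, ?_⟩
      -- langPrefix condition
      have esplit : (terms (q.drop u₂)).map (inr : T → N ⊕ T) =
          (terms ((q.drop u₂).take (m + 1))).map inr ++
          (terms ((q.drop u₂).drop (m + 1))).map inr := by
        rw [← List.map_append, ← terms_append, List.take_append_drop]
      rw [esplit] at hexp2
      refine ⟨(terms ((q.drop u₂).drop (m + 1))).map inr ++ (β ++ γ₁), ?_⟩
      have e3 : (terms (p₁ ++ (q.drop u₂).take (m + 1))).map (inr : T → N ⊕ T) ++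
          ((terms ((q.drop u₂).drop (m + 1))).map inr ++ (β ++ γ₁)) =
          (terms p₁).map inr ++ ((terms ((q.drop u₂).take (m + 1))).map inr ++
          ((terms ((q.drop u₂).drop (m + 1))).map inr ++ (β ++ γ₁))) := by
        rw [terms_append]
        simp [List.append_assoc]
      rw [e3]
      simpa [List.append_assoc] using hexp2
    · -- validity of the completed item
      refine ⟨p₁ ++ q.drop u₂, hsplice, by simpa [List.append_assoc] using hr1,
        u₁, le_trans hu₁ (by simp), γ₁, ?_, ?_, ?_, ?_⟩
      · dsimp only
        rw [chars_append, List.length_append, hb₁]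
        have := chars_take_drop q u₂
        omega
      · rw [List.take_append_of_le_length hu₁]
        exact ho₁
      · rw [List.take_append_of_le_length hu₁]
        exact hS₁
      · rw [List.drop_append_of_le_length hu₁, terms_append, List.map_append]
        exact derives_append hpre₁ hM

private theorem sound_pik {k w : ℕ} {Ts : Set (Token T C)} {X : Set (EItem N T)}
    (happ : ∀ p z, p ∈ Pset G ll D k w → z ∈ Ts → (chars p).length = k →
      terms (p ++ [z]) ∈ G.langPrefix → p ++ [z] ∈ Pset G ll D k w)
    (hX : Good G X (Pset G ll D k w)) : Good G (pik G Ts k X) (Pset G ll D k w) := by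
  have key : ∀ n, Good G ((fun J => Scan Ts k (Complete k (Predict G k J)))^[n] X)
      (Pset G ll D k w) := by
    intro n
    induction n with
    | zero => exact hX
    | succ n ihn =>
      rw [Function.iterate_succ_apply']
      exact sound_scan G ll D happ (sound_complete G ll D (sound_predict G ll D ihn))
  intro x hx
  obtain ⟨n, hn⟩ := mem_limit.mp hx
  exact key n x hn


/-! ### Completeness machinery -/

/-- An item that lives at position `ℓ`, relative to the ambient stage `(k, u)`. -/
private def Jat (k u ℓ : ℕ) (x : EItem N T) : Prop :=
  (ℓ = k → x ∈ Jset G ll D k u) ∧ (ℓ < k → ∃ v, x ∈ Jset G ll D ℓ v)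

private theorem Jat_elim {k u ℓ : ℕ} {x : EItem N T} (h : Jat G ll D k u ℓ x) (hle : ℓ ≤ k) :
    x ∈ Jset G ll D k u := by
  rcases eq_or_lt_of_le hle with heq | hlt
  · exact h.1 heq
  · obtain ⟨v, hv⟩ := h.2 hlt
    exact Jmono_u G ll D k (Nat.zero_le u) (Jset_le_zero G ll D hlt v hv)

private theorem chars_take_mono (p : List (Token T C)) {j' j : ℕ} (h : j' ≤ j) :
    (chars (p.take j')).length ≤ (chars (p.take j)).length := by
  have e : p.take j' = (p.take j).take j' := by rw [List.take_take, min_eq_left h]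
  rw [e]
  exact chars_take_le _ _

private theorem pos_le {k u : ℕ} {p : List (Token T C)} (hp : p ∈ Pset G ll D k u)
    (hpk : (chars p).length = k) {j : ℕ} (hj : j ≤ p.length) :
    (chars (p.take j)).length ≤ k := by
  rcases eq_or_lt_of_le hj with heq | hlt
  · rw [heq, List.take_length]; omega
  · rcases hq : p.drop j with _ | ⟨z, r⟩
    · exfalso
      have := List.drop_eq_nil_iff.mp hq
      omega
    · exact (Pset_tok G ll D k u p hp j z r hq).1

private theorem dn_nonterminal_head {G : CFG N T} {m₂ : ℕ} {M : N} {ts₂ : List T}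
    (d2 : Dn G m₂ [inl M] (ts₂.map inr)) :
    ∃ m₂' γ', m₂ = m₂' + 1 ∧ (M, γ') ∈ G.rules ∧ Dn G m₂' γ' (ts₂.map inr) := by
  generalize hW : ts₂.map (inr : T → N ⊕ T) = W at d2
  cases d2 with
  | refl =>
    exfalso
    cases ts₂ with
    | nil => simp at hW
    | cons a l =>
      rw [List.map_cons] at hW
      injection hW with h1 h2
      simp at h1
  | head hst hd =>
    obtain ⟨a, A, b, γ', ha, hb, hr⟩ := hst
    cases a with
    | nil =>
      simp only [List.nil_append] at ha hb
      injection ha with h1 h2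
      injection h1 with h1
      subst h1
      subst h2
      simp only [List.append_nil] at hb
      subst hb
      exact ⟨_, _, rfl, hr, hd⟩
    | cons s₀ t =>
      exfalso
      simp only [List.cons_append] at ha
      injection ha with h1 h2
      cases t <;> simp at h2

/-- Moving the dot across `α` (right-to-left recursion): completeness core. -/
private theorem F2R (k u : ℕ)
    (HTZ : Tset G ll D k u = Zset G ll D k u)
    (HTZlow : ∀ k' v, k' < k → Tset G ll D k' v = Zset G ll D k' v)
    {p : List (Token T C)} (hp : p ∈ Pset G ll D k u) (hpk : (chars p).length = k) :
    ∀ (nα : ℕ) (α : List (N ⊕ T)) (i j : ℕ), i ≤ j → j ≤ p.length →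
      ∀ (Nt : N) (β : List (N ⊕ T)),
      Jat G ll D k u (chars (p.take i)).length
        ⟨Nt, [], α ++ β, (chars (p.take i)).length, (chars (p.take i)).length⟩ →
      Dn G nα α (((terms ((p.take j).drop i))).map inr) →
      Jat G ll D k u (chars (p.take j)).length
        ⟨Nt, α, β, (chars (p.take i)).length, (chars (p.take j)).length⟩ := by
  intro nα
  induction nα using Nat.strong_induction_on with
  | _ nα IH =>
  intro α
  induction α using List.reverseRecOn with
  | nil =>
    intro i j hij hj Nt β hbase hd
    have hnil := dn_nil hd
    have hlen : ((p.take j).drop i).length = 0 := by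
      have h1 := congrArg List.length hnil
      simp only [List.length_map, length_terms, List.length_nil] at h1
      exact h1
    have hij' : i = j := by
      simp only [List.length_drop, List.length_take] at hlen
      omega
    subst hij'
    exact hbase
  | append_singleton α' sym ihα =>
    intro i j hij hj Nt β hbase hd
    obtain ⟨m₁, m₂, v₁, v₂, hm, hv, d1, d2⟩ := dn_split hd α' [sym] rfl
    obtain ⟨ts₁, ts₂, hts, hv₁, hv₂⟩ := map_split hv
    subst hv₁
    subst hv₂
    have hseglen : ((p.take j).drop i).length = j - i := by
      simp only [List.length_drop, List.length_take]
      omega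
    have hmle : ts₁.length ≤ j - i := by
      have h1 := congrArg List.length hts
      rw [length_terms] at h1
      simp only [List.length_append] at h1
      omega
    have hj'le : i + ts₁.length ≤ j := by omega
    have hj'p : i + ts₁.length ≤ p.length := le_trans hj'le hj
    have hA1 : (p.take (i + ts₁.length)).drop i = ((p.take j).drop i).take ts₁.length := by
      rw [List.drop_take, List.drop_take, List.take_take]
      have e1 : i + ts₁.length - i = ts₁.length := by omega
      rw [e1, min_eq_left hmle]
    have hA2 : terms ((p.take (i + ts₁.length)).drop i) = ts₁ := by
      rw [hA1, terms_take, hts, List.take_left]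
    have hA3 : ((p.take j).drop i).drop ts₁.length = (p.take j).drop (i + ts₁.length) := by
      rw [List.drop_drop]
    have hA4 : terms ((p.take j).drop (i + ts₁.length)) = ts₂ := by
      rw [← hA3, terms_drop, hts, List.drop_left]
    have hposj' : (chars (p.take (i + ts₁.length))).length ≤ k := pos_le G ll D hp hpk hj'p
    have hposj : (chars (p.take j)).length ≤ k := pos_le G ll D hp hpk hj
    have hbase' : Jat G ll D k u (chars (p.take i)).length
        ⟨Nt, [], α' ++ (sym :: β), (chars (p.take i)).length, (chars (p.take i)).length⟩ := by
      have e : (α' ++ [sym]) ++ β = α' ++ (sym :: β) := by simp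
      rw [← e]
      exact hbase
    have d1' : Dn G m₁ α' ((terms ((p.take (i + ts₁.length)).drop i)).map inr) := by
      rw [hA2]; exact d1
    have hitem1 : Jat G ll D k u (chars (p.take (i + ts₁.length))).length
        ⟨Nt, α', sym :: β, (chars (p.take i)).length,
          (chars (p.take (i + ts₁.length))).length⟩ := by
      rcases eq_or_lt_of_le (show m₁ ≤ nα by omega) with heq | hlt
      · exact ihα i (i + ts₁.length) (by omega) hj'p Nt (sym :: β) hbase' (heq ▸ d1')
      · exact IH m₁ hlt α' i (i + ts₁.length) (by omega) hj'p Nt (sym :: β) hbase' d1'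
    cases sym with
    | inr X =>
      -- terminal case: scanning
      have hts₂ : ts₂ = [X] := by
        have h2 := dn_single_terminal d2
        cases ts₂ with
        | nil => simp at h2
        | cons a l =>
          simp only [List.map_cons] at h2
          injection h2 with ha hl
          injection ha with ha
          subst ha
          cases l with
          | nil => rfl
          | cons b l' => simp at hl
      have hd4 : terms ((p.take j).drop (i + ts₁.length)) = [X] := by rw [hA4, hts₂]
      have hlen1 : ((p.take j).drop (i + ts₁.length)).length = 1 := by
        rw [← length_terms, hd4]
        rfl
      have hjj' : j = (i + ts₁.length) + 1 := by
        simp only [List.length_drop, List.length_take] at hlen1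
        omega
      obtain ⟨z, hz⟩ : ∃ z, (p.take j).drop (i + ts₁.length) = [z] := by
        rcases hq : (p.take j).drop (i + ts₁.length) with _ | ⟨z, r⟩
        · rw [hq] at hlen1; simp at hlen1
        · rw [hq] at hlen1
          simp only [List.length_cons, Nat.add_eq_right] at hlen1
          have hr : r = [] := List.length_eq_zero_iff.mp hlen1
          exact ⟨z, by rw [hr]⟩
      have hzX : z.1 = X := by
        rw [hz] at hd4
        simp [terms] at hd4
        exact hd4
      have hz2 : ((X, z.2) : Token T C) = z := by
        rw [← hzX]
      obtain ⟨r, hdropz⟩ : ∃ r, p.drop (i + ts₁.length) = z :: r := by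
        have e := List.drop_take (i := i + ts₁.length) (j := j) (l := p)
        rw [hz] at e
        rcases hq : p.drop (i + ts₁.length) with _ | ⟨a, r⟩
        · rw [hq] at e; simp at e
        · rw [hq] at e
          have hj1 : j - (i + ts₁.length) = 1 := by omega
          rw [hj1] at e
          simp only [List.take_succ_cons, List.take_zero] at e
          injection e with he1 he2
          exact ⟨r, by rw [he1]⟩
      obtain ⟨hπ, ⟨v', hzv'⟩, hπk⟩ := Pset_tok G ll D k u p hp (i + ts₁.length) z r hdropz
      have htakej : p.take j = p.take (i + ts₁.length) ++ [z] := by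
        rw [hjj', List.take_add]
        congr 1
        rcases hq : p.drop (i + ts₁.length) with _ | ⟨a, r'⟩
        · rw [hq] at hdropz; simp at hdropz
        · rw [hq] at hdropz
          injection hdropz with he1 he2
          rw [he1]
          rfl
      have hbinj : (chars (p.take j)).length =
          (chars (p.take (i + ts₁.length))).length + z.2.length := by
        rw [htakej, chars_append]
        simp [chars]
      rcases eq_or_lt_of_le hπ with hπe | hπl
      · -- scanning at position k
        have hzin : z ∈ Tset G ll D k u := by rw [HTZ]; exact hπk hπe
        have hit1' := hitem1.1 hπe
        rw [hπe] at hit1'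
        have hscan : (⟨Nt, α' ++ [inr X], β, (chars (p.take i)).length,
            k + z.2.length⟩ : EItem N T) ∈ Jset G ll D k u :=
          Jset_closed_scan G ll D k u (Or.inr ⟨Nt, α', X, z.2, β, _,
            (by rw [hz2]; exact hzin), hit1', rfl⟩)
        constructor
        · intro hbj
          have hz0 : z.2.length = 0 := by omega
          rw [hbj]
          simpa [hz0] using hscan
        · intro hbj
          omega
      · -- scanning at a lower position
        obtain ⟨v₂, hv₂⟩ := hitem1.2 hπl
        have hzT : z ∈ Tset G ll D (chars (p.take (i + ts₁.length))).length (max v' v₂) := by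
          rw [HTZlow _ _ hπl]
          exact Zmono G ll D _ (le_max_left _ _) hzv'
        have hit1V := Jmono_u G ll D _ (le_max_right v' v₂) hv₂
        have hscan : (⟨Nt, α' ++ [inr X], β, (chars (p.take i)).length,
            (chars (p.take (i + ts₁.length))).length + z.2.length⟩ : EItem N T) ∈
            Jset G ll D (chars (p.take (i + ts₁.length))).length (max v' v₂) :=
          Jset_closed_scan G ll D _ _ (Or.inr ⟨Nt, α', X, z.2, β, _,
            (by rw [hz2]; exact hzT), hit1V, rfl⟩)
        constructor
        · intro hbj
          rw [hbj] at hbinj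
          rw [← hbinj] at hscan
          rw [hbj]
          exact Jmono_u G ll D k (Nat.zero_le u) (Jset_le_zero G ll D hπl _ hscan)
        · intro hbj
          rcases Nat.eq_zero_or_pos z.2.length with hz0 | hz0
          · refine ⟨max v' v₂, ?_⟩
            rw [hbinj, hz0]
            simpa [hz0] using hscan
          · refine ⟨0, ?_⟩
            rw [hbinj]
            exact Jset_le_zero G ll D (by omega) _ hscan
    | inl M =>
      -- nonterminal case: predict + complete
      obtain ⟨m₂', γ', rfl, hrM, d2'⟩ := dn_nonterminal_head d2
      have hℓle : (chars (p.take (i + ts₁.length))).length ≤ (chars (p.take j)).length :=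
        chars_take_mono p hj'le
      have hPB : Jat G ll D k u (chars (p.take (i + ts₁.length))).length
          ⟨M, [], γ' ++ [], (chars (p.take (i + ts₁.length))).length,
            (chars (p.take (i + ts₁.length))).length⟩ := by
        simp only [List.append_nil]
        rcases eq_or_lt_of_le hposj' with hπe | hπl
        · have hit1' := hitem1.1 hπe
          rw [hπe] at hit1' ⊢
          constructor
          · intro _
            exact Jset_closed_predict G ll D k u
              (Or.inr ⟨M, γ', hrM, ⟨Nt, α', β, _, hit1'⟩, rfl⟩)
          · intro h; omega
        · obtain ⟨v₂, hv₂⟩ := hitem1.2 hπl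
          constructor
          · intro h; omega
          · intro _
            exact ⟨v₂, Jset_closed_predict G ll D _ v₂
              (Or.inr ⟨M, γ', hrM, ⟨Nt, α', β, _, hv₂⟩, rfl⟩)⟩
      have hrec := IH m₂' (by omega) γ' (i + ts₁.length) j hj'le hj M []
        hPB (by rw [hA4]; exact d2')
      constructor
      · intro hbj
        have hcomp2 := hrec.1 hbj
        rw [hbj] at hcomp2
        have hit1k := Jat_elim G ll D hitem1 hposj'
        rw [hbj]
        exact Jset_closed_complete G ll D k u
          (Or.inr ⟨Nt, α', M, β, _, _, γ', hit1k, hcomp2, rfl⟩)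
      · intro hbj
        have hπl : (chars (p.take (i + ts₁.length))).length < k := by omega
        obtain ⟨v₂, hv₂⟩ := hitem1.2 hπl
        obtain ⟨v₃, hv₃⟩ := hrec.2 hbj
        have hit1' : (⟨Nt, α', inl M :: β, (chars (p.take i)).length,
            (chars (p.take (i + ts₁.length))).length⟩ : EItem N T) ∈
            Jset G ll D (chars (p.take j)).length (max v₂ v₃) := by
          rcases eq_or_lt_of_le hℓle with he | hl
          · rw [← he]
            exact Jmono_u G ll D _ (le_max_left _ _) hv₂
          · exact Jmono_u G ll D _ (Nat.zero_le _) (Jset_le_zero G ll D hl v₂ hv₂)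
        have hcomp' := Jmono_u G ll D _ (le_max_right v₂ v₃) hv₃
        exact ⟨max v₂ v₃, Jset_closed_complete G ll D _ _
          (Or.inr ⟨Nt, α', M, β, _, _, γ', hit1', hcomp', rfl⟩)⟩

/-- Predicted items exist for every nonterminal reachable after a recognized prefix. -/
private theorem F1 (k u : ℕ)
    (HTZ : Tset G ll D k u = Zset G ll D k u)
    (HTZlow : ∀ k' v, k' < k → Tset G ll D k' v = Zset G ll D k' v)
    {p : List (Token T C)} (hp : p ∈ Pset G ll D k u) (hpk : (chars p).length = k) :
    ∀ nS : ℕ, ∀ j, j ≤ p.length → ∀ (Nt : N) (δ : List (N ⊕ T)),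
      Dn G nS [inl G.start] ((terms (p.take j)).map inr ++ inl Nt :: δ) →
      ∀ γ, (Nt, γ) ∈ G.rules →
      Jat G ll D k u (chars (p.take j)).length
        ⟨Nt, [], γ, (chars (p.take j)).length, (chars (p.take j)).length⟩ := by
  intro nS
  induction nS using Nat.strong_induction_on with
  | _ nS IH =>
  intro j hj Nt δ hdn γ hγ
  rcases dn_occ hdn with ⟨n₁, α₁, β, hn, heq, hdn1⟩ |
    ⟨n₁, n₂, w₁, w₂, M', αl, αr, δ', hlt, hw, hr2, hd1, hd2⟩
  · -- the occurrence is the start symbol itself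
    cases α₁ with
    | nil =>
      simp only [List.nil_append] at heq
      injection heq with h1 h2
      injection h1 with h1
      subst h1
      subst h2
      have hnil := dn_nil hdn1
      have hpj : p.take j = [] := by
        have h1 := congrArg List.length hnil
        simp only [List.length_map, length_terms, List.length_nil] at h1
        exact List.length_eq_zero_iff.mp h1
      rw [hpj]
      have h00 : (⟨G.start, [], γ, (chars ([] : List (Token T C))).length,
          (chars ([] : List (Token T C))).length⟩ : EItem N T) ∈ Jset G ll D 0 0 := by
        rw [Jset_zero_zero]
        exact pik_sub G _ _ _ ⟨γ, hγ, by simp [chars]⟩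
      constructor
      · intro hk
        have hk' : k = 0 := by simpa [chars] using hk.symm
        subst hk'
        exact Jmono_u G ll D 0 (Nat.zero_le u) h00
      · intro _
        refine ⟨0, ?_⟩
        have he : (chars ([] : List (Token T C))).length = 0 := by simp [chars]
        rw [he]
        exact h00
    | cons a tl =>
      exfalso
      simp only [List.cons_append] at heq
      injection heq with h1 h2
      cases tl <;> simp at h2
  · -- the occurrence was introduced by a rule
    have hlenj : (terms (p.take j)).length = j := by
      rw [length_terms]
      simp
      omega
    have hi'le : w₁.length ≤ j := by
      have h1 := congrArg List.length hw
      rw [hlenj] at h1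
      simp only [List.length_append] at h1
      omega
    have hi'p : w₁.length ≤ p.length := le_trans hi'le hj
    have hw₁ : terms (p.take w₁.length) = w₁ := by
      have e : p.take w₁.length = (p.take j).take w₁.length := by
        rw [List.take_take, min_eq_left hi'le]
      rw [e, terms_take, hw, List.take_left]
    have hw₂ : terms ((p.take j).drop w₁.length) = w₂ := by
      rw [terms_drop, hw, List.drop_left]
    have hPB := IH n₁ (by omega) w₁.length hi'p M' δ'
      (by rw [hw₁]; exact hd1) (αl ++ inl Nt :: αr) hr2
    have hitem3 := F2R G ll D k u HTZ HTZlow hp hpk n₂ αl w₁.length j hi'le hj M'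
      (inl Nt :: αr) hPB (by rw [hw₂]; exact hd2)
    constructor
    · intro hk
      have h3 := hitem3.1 hk
      rw [hk] at h3 ⊢
      exact Jset_closed_predict G ll D k u
        (Or.inr ⟨Nt, γ, hγ, ⟨M', αl, αr, _, h3⟩, rfl⟩)
    · intro hlt'
      obtain ⟨v₃, hv₃⟩ := hitem3.2 hlt'
      exact ⟨v₃, Jset_closed_predict G ll D _ v₃
        (Or.inr ⟨Nt, γ, hγ, ⟨M', αl, αr, _, hv₃⟩, rfl⟩)⟩


/-! ### The master invariant -/

private theorem hEInit : Good G (EInit G) (Pset G ll D 0 0) := by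
  rintro x ⟨γ, hγ, rfl⟩
  refine ⟨[], rfl, by simpa using hγ, 0, le_refl _, [], rfl, rfl, ?_, ?_⟩
  · exact Relation.ReflTransGen.refl
  · exact Relation.ReflTransGen.refl

private theorem master : ∀ k u, Tset G ll D k u = Zset G ll D k u ∧
    Good G (Jset G ll D k u) (Pset G ll D k u) := by
  intro k
  induction k using Nat.strong_induction_on with
  | _ k Hk =>
  have HTZlow : ∀ k' v, k' < k → Tset G ll D k' v = Zset G ll D k' v :=
    fun k' v h => (Hk k' h v).1
  intro u
  induction u with
  | zero =>
    refine ⟨rfl, ?_⟩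
    cases k with
    | zero =>
      rw [Jset_zero_zero]
      exact sound_pik G ll D (fun p z _ hz _ _ => absurd hz (Set.notMem_empty z))
        (hEInit G ll D)
    | succ k' =>
      rw [Jset_zero_succ]
      refine sound_pik G ll D (fun p z _ hz _ _ => absurd hz (Set.notMem_empty z)) ?_
      intro x hx
      obtain ⟨v, hv⟩ := Set.mem_iUnion.mp hx
      obtain ⟨p, hp, hval⟩ := (Hk k' (Nat.lt_succ_self k') v).2 x hv
      exact ⟨p, by rw [Pset_zero_succ]; exact Set.mem_iUnion.mpr ⟨v, hp⟩, hval⟩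
  | succ u ihu =>
    obtain ⟨hTZ, hSound⟩ := ihu
    have hcand : {x : Token T C | ∃ X N' α β i,
        (⟨N', α, Sum.inr X :: β, i, k⟩ : EItem N T) ∈ Jset G ll D k u ∧ x ∈ ll.Lex X D k} =
        Wtok G ll D (Pset G ll D k u) k := by
      apply Set.Subset.antisymm
      · rintro x ⟨X, N', α, β, i, hitem, hlex⟩
        obtain ⟨hX1, -, -⟩ := ll.lex_sound X D k x hlex
        obtain ⟨p, hp, hr1, u₁, hu₁, γ₁, hbin, hor, hS, hpre⟩ := hSound _ hitem
        dsimp only at hr1 hbin hor hS hpre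
        have hexp := derives_expand hS hr1 hpre
        have e : (terms (p.take u₁)).map (inr : T → N ⊕ T) ++
            ((terms (p.drop u₁)).map inr ++ ((inr X :: β) ++ γ₁)) =
            (terms (p ++ [x])).map inr ++ (β ++ γ₁) := by
          have h1 : terms (p ++ [x]) = terms p ++ [X] := by simp [terms, hX1]
          rw [h1, List.map_append, ← terms_take_drop_map p u₁]
          simp [List.append_assoc, take_drop_assoc]
        rw [e] at hexp
        refine ⟨?_, p, hp, hbin, β ++ γ₁, hexp⟩
        show x ∈ ll.Lex x.1 D k
        rw [hX1]
        exact hlex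
      · rintro x ⟨hxX, p, hp, hplen, hlang⟩
        obtain ⟨δ0, hder⟩ := hlang
        have e : (terms (p ++ [x])).map (inr : T → N ⊕ T) ++ δ0 =
            (terms p).map inr ++ inr x.1 :: δ0 := by
          simp [terms, List.append_assoc]
        rw [e] at hder
        obtain ⟨nS, hdn⟩ := derives_dn hder
        rcases dn_occ hdn with ⟨n₁, α₁, β, hn, heq, hdn1⟩ |
          ⟨n₁, n₂, w₁, w₂, M', αl, αr, δ', hlt, hw, hr2, hd1, hd2⟩
        · exfalso
          cases α₁ with
          | nil =>
            simp only [List.nil_append] at heq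
            injection heq with h1 h2
            simp at h1
          | cons a tl =>
            simp only [List.cons_append] at heq
            injection heq with h1 h2
            cases tl <;> simp at h2
        · have hi'p : w₁.length ≤ p.length := by
            have h1 := congrArg List.length hw
            rw [length_terms] at h1
            simp only [List.length_append] at h1
            omega
          have hw₁ : terms (p.take w₁.length) = w₁ := by
            rw [terms_take, hw, List.take_left]
          have hw₂ : terms ((p.take p.length).drop w₁.length) = w₂ := by
            rw [List.take_length, terms_drop, hw, List.drop_left]
          have hPB := F1 G ll D k u hTZ HTZlow hp hplen n₁ w₁.length hi'p M' δ'
            (by rw [hw₁]; exact hd1) (αl ++ inr x.1 :: αr) hr2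
          have hitem3 := F2R G ll D k u hTZ HTZlow hp hplen n₂ αl w₁.length p.length hi'p
            (le_refl _) M' (inr x.1 :: αr) hPB (by rw [hw₂]; exact hd2)
          have hbink : (chars (p.take p.length)).length = k := by
            rw [List.take_length]; exact hplen
          have h3 := hitem3.1 hbink
          rw [hbink] at h3
          exact ⟨x.1, M', αl, αr, (chars (p.take w₁.length)).length, h3, hxX⟩
    have hTZ1 : Tset G ll D k (u + 1) = Zset G ll D k (u + 1) := by
      rw [Tset_succ, Zset_succ, Tokens_def, hTZ, hcand]
    refine ⟨hTZ1, ?_⟩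
    rw [Jset_succ]
    refine sound_pik G ll D ?_ ?_
    · intro p z hp hz hc hl
      rw [hTZ1] at hz
      exact Pset_append G ll D hp hz hc hl
    · intro x hx
      obtain ⟨p, hp, hval⟩ := hSound x hx
      exact ⟨p, Pmono_u G ll D k (Nat.le_succ u) hp, hval⟩

end Soundness



/-- Soundness of the local-lexing Earley algorithm: every computed item is `p`-valid
for some path `p ∈ 𝕻`, i.e. `𝕴 ⊆ ⟨𝕻⟩`. -/
theorem items_sound {N T C : Type*} (G : CFG N T) (ll : LocalLexing T C) (D : List C) :
    Items G ll D ⊆ Gen G (PP G ll D) := by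
  intro x hx
  obtain ⟨u, hu⟩ := Set.mem_iUnion.mp hx
  obtain ⟨p, hp, hv⟩ := (master G ll D D.length u).2 x hu
  exact ⟨p, Set.mem_iUnion.mpr ⟨u, hp⟩, hv⟩

end Defs
end LL
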